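/- Let a > 0, D₁ > 0, τ > 0, and let R_t be a random variable with density f_{r,t} (parameters r₀ > 0, D₂ > 0, t > 0). Let r* > a be the unique maximizer of ĥ(·,τ) on (a,∞) and h* = ĥ(r*,τ). For 0 < h < h*, let r₁(h) < r₂(h) denote the two solutions in (a,∞) of ĥ(r,τ) = h, and let ĥ'(r,τ) denote the partial derivative of ĥ with respect to r. Then for all 0 ≤ h_a < h_b < h*, the probability P( h_a < ĥ(R_t,τ) ≤ h_b ) = ∫_{h_a}^{h_b} [ f_{r,t}(r₁(h))/ĥ'(r₁(h),τ) − f_{r,t}(r₂(h))/ĥ'(r₂(h),τ) ] dh; i.e., on (0,h*) the law of ĥ(R_t,τ) has density h ↦ f_{r,t}(r₁(h))/ĥ'(r₁(h),τ) − f_{r,t}(r₂(h))/ĥ'(r₂(h),τ). -/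

import Mathlib

open MeasureTheory Real

/-- The channel impulse response at distance `r` and elapsed time `τ`. -/
noncomputable def hCIR (a D₁ τ r : ℝ) : ℝ :=
  a / Real.sqrt (4 * π * D₁ * τ ^ 3) * (1 - a / r) * Real.exp (-(r - a) ^ 2 / (4 * D₁ * τ))

/-- The partial derivative of the channel impulse response with respect to the distance. -/
noncomputable def hCIRderiv (a D₁ τ r : ℝ) : ℝ :=
  a / Real.sqrt (4 * π * D₁ * τ ^ 3) * Real.exp (-(r - a) ^ 2 / (4 * D₁ * τ))
    * (a / r ^ 2 - (r - a) / (2 * D₁ * τ) * (1 - a / r))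

/-- The density of the distance between transmitter and receiver at time `t`. -/
noncomputable def fdist (r₀ D₂ t x : ℝ) : ℝ :=
  if 0 < x then
    x / (r₀ * Real.sqrt (π * D₂ * t)) * Real.exp (-(x ^ 2 + r₀ ^ 2) / (4 * D₂ * t))
      * Real.sinh (r₀ * x / (2 * D₂ * t))
  else 0

/-!
On `(a, r*)` and on `(r*, ∞)` the map `ĥ(·, τ)` is injective with inverses `r₁` and `r₂`, and
its derivative does not vanish there: `ĥ'` is a positive factor times a function strictly
decreasing on `(a, ∞)`, and it vanishes at the local maximum `r*`. The event
`h_a < ĥ(R_t, τ) ≤ h_b` therefore splits into one piece on each branch (for `R_t ≤ a` either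
`ĥ ≤ 0` or the density vanishes, and `R_t = r*` gives `ĥ = h* > h_b`), and the one-dimensional
change of variables turns the mass of each piece into `∫ f(rᵢ(h)) / |ĥ'(rᵢ(h))| dh`.
-/

open Set

section Extremum

variable {α β : Type*} [LinearOrder α] [Preorder β] {F : α → β} {a c : α}

theorem mem_Ioo_and_mem_Ioi_of_strictMonoOn_Ioc_of_strictAntiOn_Ici
    (hmono : StrictMonoOn F (Ioc a c)) (hanti : StrictAntiOn F (Ici c)) {x y : α} (hax : a < x)
    (hxy : x < y) (hF : F x = F y) : x ∈ Ioo a c ∧ y ∈ Ioi c := by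
  refine ⟨⟨hax, ?_⟩, ?_⟩
  · by_contra! hcx
    exact (hanti hcx (hcx.trans hxy.le) hxy).ne' hF
  · by_contra! hyc
    rw [mem_Ioi, not_lt] at hyc
    exact (hmono ⟨hax, (hxy.trans_le hyc).le⟩ ⟨hax.trans hxy, hyc⟩ hxy).ne hF

theorem isLocalMax_of_monotoneOn_Ioc_of_antitoneOn_Ici [TopologicalSpace α] [OrderTopology α]
    (hac : a < c) (hmono : MonotoneOn F (Ioc a c)) (hanti : AntitoneOn F (Ici c)) :
    IsLocalMax F c := by
  filter_upwards [Ioi_mem_nhds hac] with x hax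
  rcases le_total x c with hxc | hcx
  · exact hmono ⟨hax, hxc⟩ ⟨hac, le_rfl⟩ hxc
  · exact hanti le_rfl hcx hcx

end Extremum

section ChangeOfVariables

variable {F F' f r : ℝ → ℝ} {I J : Set ℝ}

theorem integrableOn_and_setIntegral_branch (hI : MeasurableSet I) (hJ : MeasurableSet J)
    (hFm : Measurable F) (hF : ∀ x ∈ I, HasDerivAt F (F' x) x) (hF' : ∀ x ∈ I, F' x ≠ 0)
    (hinj : InjOn F I) (hr : ∀ y ∈ J, r y ∈ I ∧ F (r y) = y) (hf : IntegrableOn f (I ∩ F ⁻¹' J)) :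
    IntegrableOn (fun y => f (r y) / |F' (r y)|) J ∧
      ∫ y in J, f (r y) / |F' (r y)| = ∫ x in I ∩ F ⁻¹' J, f x := by
  have hS : MeasurableSet (I ∩ F ⁻¹' J) := hI.inter (hFm hJ)
  have himage : F '' (I ∩ F ⁻¹' J) = J := by
    refine (image_inter_preimage F I J).trans (inter_eq_right.2 fun y hy => ?_)
    exact ⟨r y, (hr y hy).1, (hr y hy).2⟩
  have hderiv : ∀ x ∈ I ∩ F ⁻¹' J, HasDerivWithinAt F (F' x) (I ∩ F ⁻¹' J) x :=
    fun x hx => (hF x hx.1).hasDerivWithinAt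
  have hinj' : InjOn F (I ∩ F ⁻¹' J) := hinj.mono inter_subset_left
  have hpointwise : ∀ x ∈ I ∩ F ⁻¹' J, |F' x| • (f (r (F x)) / |F' (r (F x))|) = f x := by
    intro x hx
    have hrx : r (F x) = x := hinj (hr _ hx.2).1 hx.1 (hr _ hx.2).2
    rw [hrx, smul_eq_mul, mul_div_cancel₀ _ (abs_ne_zero.2 (hF' x hx.1))]
  constructor
  · rw [← himage, integrableOn_image_iff_integrableOn_abs_deriv_smul hS hderiv hinj']
    exact hf.congr_fun (fun x hx => (hpointwise x hx).symm) hS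
  · conv_lhs => rw [← himage, integral_image_eq_integral_abs_deriv_smul hS hderiv hinj']
    exact setIntegral_congr_fun hS hpointwise

end ChangeOfVariables

section Law

variable {Ω : Type*} [MeasurableSpace Ω] {P : Measure Ω} {R : Ω → ℝ} {f : ℝ → ℝ}

theorem toReal_measure_preimage_eq_setIntegral (hR : Measurable R) (hfm : Measurable f)
    (hf : ∀ x, 0 ≤ f x) (hlaw : P.map R = volume.withDensity fun x => ENNReal.ofReal (f x))
    {s : Set ℝ} (hs : MeasurableSet s) : (P (R ⁻¹' s)).toReal = ∫ x in s, f x := by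
  rw [integral_eq_lintegral_of_nonneg_ae (ae_of_all _ hf) hfm.aestronglyMeasurable,
    ← withDensity_apply _ hs, ← hlaw, Measure.map_apply hR hs]

theorem integrable_of_map_eq_withDensity [IsFiniteMeasure P] (hfm : Measurable f)
    (hf : ∀ x, 0 ≤ f x)
    (hlaw : P.map R = volume.withDensity fun x => ENNReal.ofReal (f x)) : Integrable f := by
  refine ⟨hfm.aestronglyMeasurable, (hasFiniteIntegral_iff_ofReal (ae_of_all _ hf)).2 ?_⟩
  have hfinite := measure_lt_top (P.map R) univ
  rwa [hlaw, withDensity_apply _ MeasurableSet.univ, Measure.restrict_univ] at hfinite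

end Law

theorem measurable_fdist (r₀ D₂ t : ℝ) : Measurable (fdist r₀ D₂ t) :=
  Measurable.ite measurableSet_Ioi (by fun_prop) measurable_const

theorem fdist_nonneg {r₀ D₂ t : ℝ} (hr₀ : 0 < r₀) (hD₂ : 0 < D₂) (ht : 0 < t) (x : ℝ) :
    0 ≤ fdist r₀ D₂ t x := by
  unfold fdist
  split_ifs with hx
  · have hsinh : 0 < sinh (r₀ * x / (2 * D₂ * t)) := sinh_pos_iff.2 (by positivity)
    have hsqrt : 0 < √(π * D₂ * t) := sqrt_pos.2 (by positivity)
    positivity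
  · exact le_rfl

section CIR

variable {a D₁ τ : ℝ}

theorem measurable_hCIR (a D₁ τ : ℝ) : Measurable (hCIR a D₁ τ) := by
  unfold hCIR
  fun_prop

theorem hasDerivAt_hCIR {x : ℝ} (hx : x ≠ 0) :
    HasDerivAt (hCIR a D₁ τ) (hCIRderiv a D₁ τ x) x := by
  have hfactor : HasDerivAt (fun r : ℝ => 1 - a / r) (a / x ^ 2) x := by
    refine (((hasDerivAt_inv hx).const_mul a).const_sub 1).congr_deriv ?_
    field_simp
  have hexponent : HasDerivAt (fun r : ℝ => -(r - a) ^ 2 / (4 * D₁ * τ))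
      (-(2 * (x - a)) / (4 * D₁ * τ)) x := by
    refine ((((hasDerivAt_id x).sub_const a).pow 2).neg.div_const _).congr_deriv ?_
    simp
  refine ((hfactor.const_mul _).mul hexponent.exp).congr_deriv ?_
  unfold hCIRderiv
  field_simp
  ring

theorem hCIR_nonpos_of_le (ha : 0 < a) {x : ℝ} (hx : 0 < x) (hxa : x ≤ a) :
    hCIR a D₁ τ x ≤ 0 := by
  have hfactor : 1 - a / x ≤ 0 := sub_nonpos.2 ((one_le_div hx).2 hxa)
  unfold hCIR
  exact mul_nonpos_of_nonpos_of_nonneg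
    (mul_nonpos_of_nonneg_of_nonpos (by positivity) hfactor) (exp_pos _).le

theorem fdist_eq_zero_of_le_of_hCIR_pos (ha : 0 < a) (r₀ D₂ t : ℝ) {x : ℝ} (hxa : x ≤ a)
    (hpos : 0 < hCIR a D₁ τ x) : fdist r₀ D₂ t x = 0 :=
  if_neg fun hx => (hCIR_nonpos_of_le ha hx hxa).not_gt hpos

theorem strictAntiOn_hCIRderiv_factor (ha : 0 < a) (hD₁ : 0 < D₁) (hτ : 0 < τ) :
    StrictAntiOn (fun r : ℝ => a / r ^ 2 - (r - a) / (2 * D₁ * τ) * (1 - a / r)) (Ioi a) := by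
  intro x hx y hy hxy
  simp only [mem_Ioi] at hx hy
  have hx0 : 0 < x := ha.trans hx
  have hy0 : 0 < y := ha.trans hy
  have hinv : a / y ^ 2 < a / x ^ 2 :=
    div_lt_div_of_pos_left ha (by positivity) (by nlinarith)
  have hquad : (x - a) / (2 * D₁ * τ) * (1 - a / x) < (y - a) / (2 * D₁ * τ) * (1 - a / y) := by
    rw [show (1:ℝ) - a / x = (x - a) / x by field_simp,
        show (1:ℝ) - a / y = (y - a) / y by field_simp,
        div_mul_div_comm, div_mul_div_comm,
        div_lt_div_iff₀ (by positivity) (by positivity)]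
    nlinarith [mul_pos (mul_pos hD₁ hτ)
      (mul_pos (sub_pos.2 hxy) (show (0:ℝ) < x * y - a ^ 2 by nlinarith))]
  exact sub_lt_sub hinv hquad

theorem hCIRderiv_prefactor_pos (ha : 0 < a) (hD₁ : 0 < D₁) (hτ : 0 < τ) (r : ℝ) :
    0 < a / √(4 * π * D₁ * τ ^ 3) * exp (-(r - a) ^ 2 / (4 * D₁ * τ)) := by
  have : 0 < √(4 * π * D₁ * τ ^ 3) := sqrt_pos.2 (by positivity)
  positivity

theorem hCIRderiv_pos_of_lt (ha : 0 < a) (hD₁ : 0 < D₁) (hτ : 0 < τ) {x c : ℝ} (hax : a < x)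
    (hxc : x < c) (hc : hCIRderiv a D₁ τ c = 0) : 0 < hCIRderiv a D₁ τ x := by
  unfold hCIRderiv at hc ⊢
  have hc' := (mul_eq_zero.1 hc).resolve_left (hCIRderiv_prefactor_pos ha hD₁ hτ c).ne'
  have hanti := strictAntiOn_hCIRderiv_factor ha hD₁ hτ hax (hax.trans hxc) hxc
  exact mul_pos (hCIRderiv_prefactor_pos ha hD₁ hτ x) (by simp only at hanti; linarith)

theorem hCIRderiv_neg_of_lt (ha : 0 < a) (hD₁ : 0 < D₁) (hτ : 0 < τ) {x c : ℝ} (hac : a < c)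
    (hcx : c < x) (hc : hCIRderiv a D₁ τ c = 0) : hCIRderiv a D₁ τ x < 0 := by
  unfold hCIRderiv at hc ⊢
  have hc' := (mul_eq_zero.1 hc).resolve_left (hCIRderiv_prefactor_pos ha hD₁ hτ c).ne'
  have hanti := strictAntiOn_hCIRderiv_factor ha hD₁ hτ hac (hac.trans hcx) hcx
  exact mul_neg_of_pos_of_neg (hCIRderiv_prefactor_pos ha hD₁ hτ x)
    (by simp only at hanti; linarith)

theorem hCIRderiv_eq_zero_of_monotoneOn_of_antitoneOn {c : ℝ} (ha : 0 < a) (hac : a < c)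
    (hmono : MonotoneOn (hCIR a D₁ τ) (Ioc a c)) (hanti : AntitoneOn (hCIR a D₁ τ) (Ici c)) :
    hCIRderiv a D₁ τ c = 0 :=
  (isLocalMax_of_monotoneOn_Ioc_of_antitoneOn_Ici hac hmono hanti).hasDerivAt_eq_zero
    (hasDerivAt_hCIR (ha.trans hac).ne')

theorem setIntegral_preimage_hCIR_eq_add (ha : 0 < a) {c u v : ℝ} (hu : 0 ≤ u)
    (hv : v < hCIR a D₁ τ c) {r₀ D₂ t : ℝ} (hf : Integrable (fdist r₀ D₂ t)) :
    ∫ x in hCIR a D₁ τ ⁻¹' Ioc u v, fdist r₀ D₂ t x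
      = (∫ x in Ioo a c ∩ hCIR a D₁ τ ⁻¹' Ioc u v, fdist r₀ D₂ t x)
        + ∫ x in Ioi c ∩ hCIR a D₁ τ ⁻¹' Ioc u v, fdist r₀ D₂ t x := by
  have hS := measurable_hCIR a D₁ τ (measurableSet_Ioc (a := u) (b := v))
  rw [← setIntegral_union ((Ioc_disjoint_Ioi_same.mono_left Ioo_subset_Ioc_self).mono
      inter_subset_left inter_subset_left) (measurableSet_Ioi.inter hS)
      hf.integrableOn hf.integrableOn]
  refine setIntegral_eq_of_subset_of_forall_sdiff_eq_zero hS
    (union_subset inter_subset_right inter_subset_right) fun x ⟨hxS, hx⟩ => ?_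
  rcases le_or_gt x a with hxa | hax
  · exact fdist_eq_zero_of_le_of_hCIR_pos ha r₀ D₂ t hxa (hu.trans_lt hxS.1)
  rcases lt_trichotomy x c with hxc | rfl | hcx
  · exact absurd (Or.inl ⟨⟨hax, hxc⟩, hxS⟩) hx
  · exact absurd (hxS.2.trans_lt hv) (lt_irrefl _)
  · exact absurd (Or.inr ⟨hcx, hxS⟩) hx

end CIR

theorem CIR_pdf {Ω : Type*} [MeasurableSpace Ω] (P : Measure Ω) [IsProbabilityMeasure P]
    (a D₁ D₂ τ t r₀ : ℝ) (ha : 0 < a) (hD₁ : 0 < D₁) (hD₂ : 0 < D₂)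
    (hτ : 0 < τ) (ht : 0 < t) (hr₀ : 0 < r₀)
    (R : Ω → ℝ) (hRmeas : Measurable R)
    (hRlaw : P.map R = volume.withDensity (fun x => ENNReal.ofReal (fdist r₀ D₂ t x)))
    (rstar : ℝ) (hrstar : a < rstar)
    (hmono : StrictMonoOn (hCIR a D₁ τ) (Set.Ioc a rstar))
    (hanti : StrictAntiOn (hCIR a D₁ τ) (Set.Ici rstar))
    (r₁ r₂ : ℝ → ℝ)
    (hroots : ∀ h ∈ Set.Ioo (0:ℝ) (hCIR a D₁ τ rstar),
      a < r₁ h ∧ r₁ h < r₂ h ∧ hCIR a D₁ τ (r₁ h) = h ∧ hCIR a D₁ τ (r₂ h) = h) :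
    ∀ ha' hb : ℝ, 0 ≤ ha' → ha' < hb → hb < hCIR a D₁ τ rstar →
      (P {ω | ha' < hCIR a D₁ τ (R ω) ∧ hCIR a D₁ τ (R ω) ≤ hb}).toReal
        = ∫ h in ha'..hb,
            fdist r₀ D₂ t (r₁ h) / hCIRderiv a D₁ τ (r₁ h)
              - fdist r₀ D₂ t (r₂ h) / hCIRderiv a D₁ τ (r₂ h) := by
  intro ha' hb hha' hab hbs
  set F := hCIR a D₁ τ
  set f := fdist r₀ D₂ t
  set J := Ioc ha' hb
  have hF'rstar := hCIRderiv_eq_zero_of_monotoneOn_of_antitoneOn ha hrstar hmono.monotoneOn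
    hanti.antitoneOn
  have hbranches : ∀ h ∈ J,
      (r₁ h ∈ Ioo a rstar ∧ F (r₁ h) = h) ∧ (r₂ h ∈ Ioi rstar ∧ F (r₂ h) = h) := by
    intro h hh
    obtain ⟨ha₁, h₁₂, hF₁, hF₂⟩ := hroots h ⟨hha'.trans_lt hh.1, hh.2.trans_lt hbs⟩
    obtain ⟨h₁, h₂⟩ := mem_Ioo_and_mem_Ioi_of_strictMonoOn_Ioc_of_strictAntiOn_Ici hmono hanti
      ha₁ h₁₂ (hF₁.trans hF₂.symm)
    exact ⟨⟨h₁, hF₁⟩, h₂, hF₂⟩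
  have hfm := measurable_fdist r₀ D₂ t
  have hf0 := fdist_nonneg hr₀ hD₂ ht
  have hf := integrable_of_map_eq_withDensity hfm hf0 hRlaw
  obtain ⟨hint₁, hbranch₁⟩ := integrableOn_and_setIntegral_branch measurableSet_Ioo
    measurableSet_Ioc (measurable_hCIR a D₁ τ) (fun x hx => hasDerivAt_hCIR (ha.trans hx.1).ne')
    (fun x hx => (hCIRderiv_pos_of_lt ha hD₁ hτ hx.1 hx.2 hF'rstar).ne')
    (hmono.injOn.mono Ioo_subset_Ioc_self) (fun h hh => (hbranches h hh).1) hf.integrableOn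
  obtain ⟨hint₂, hbranch₂⟩ := integrableOn_and_setIntegral_branch measurableSet_Ioi
    measurableSet_Ioc (measurable_hCIR a D₁ τ)
    (fun x hx => hasDerivAt_hCIR (ha.trans (hrstar.trans hx)).ne')
    (fun x hx => (hCIRderiv_neg_of_lt ha hD₁ hτ hrstar hx hF'rstar).ne)
    (hanti.injOn.mono Ioi_subset_Ici_self) (fun h hh => (hbranches h hh).2) hf.integrableOn
  calc (P {ω | ha' < F (R ω) ∧ F (R ω) ≤ hb}).toReal = ∫ x in F ⁻¹' J, f x :=
        toReal_measure_preimage_eq_setIntegral hRmeas hfm hf0 hRlaw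
          (measurable_hCIR a D₁ τ measurableSet_Ioc)
    _ = ∫ h in J,
          (f (r₁ h) / |hCIRderiv a D₁ τ (r₁ h)| + f (r₂ h) / |hCIRderiv a D₁ τ (r₂ h)|) := by
        rw [integral_add hint₁ hint₂, hbranch₁, hbranch₂,
          setIntegral_preimage_hCIR_eq_add ha hha' hbs hf]
    _ = _ := by
        rw [intervalIntegral.integral_of_le hab.le]
        refine setIntegral_congr_fun measurableSet_Ioc fun h hh => ?_
        obtain ⟨⟨h₁, -⟩, h₂, -⟩ := hbranches h hh
        rw [abs_of_pos (hCIRderiv_pos_of_lt ha hD₁ hτ h₁.1 h₁.2 hF'rstar),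
          abs_of_neg (hCIRderiv_neg_of_lt ha hD₁ hτ hrstar h₂ hF'rstar), div_neg, sub_eq_add_neg]
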